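/- Let p be a prime, let ℤ[1/p] denote the additive group of all rational numbers of the form z/p^m with z ∈ ℤ and m ∈ ℕ, and let ℤ_{p^∞} denote the Prüfer p-group ℤ[1/p]/ℤ. The direct sum of countably infinitely many copies of ℤ_{p^∞} has no automatic presentation: there do not exist a finite alphabet Σ, a regular language A ⊆ Σ*, and a binary operation on A whose graph is a regular ternary relation, such that the resulting structure is a group isomorphic to ⨁_{n∈ℕ} ℤ_{p^∞}. -/

import Mathlib

/-- The convolution of an `n`-tuple of words. -/
def conv {α : Type*} {n : ℕ} (w : Fin n → List α) : List (Fin n → Option α) :=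
  (List.range (Finset.univ.sup fun i => (w i).length)).map fun k i => (w i)[k]?

/-- The additive group `ℤ[1/p]` of rationals of the form `z/p^m`, `z ∈ ℤ`, `m ∈ ℕ`. -/
def ZOneOverP (p : ℕ) (hp : p.Prime) : AddSubgroup ℚ where
  carrier := {q : ℚ | ∃ (z : ℤ) (m : ℕ), q = z / p ^ m}
  zero_mem' := ⟨0, 0, by simp⟩
  add_mem' := by
    rintro a b ⟨z₁, m₁, rfl⟩ ⟨z₂, m₂, rfl⟩
    have hp0 : (p : ℚ) ≠ 0 := by exact_mod_cast hp.ne_zero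
    refine ⟨z₁ * p ^ m₂ + z₂ * p ^ m₁, m₁ + m₂, ?_⟩
    push_cast
    rw [pow_add]
    field_simp
  neg_mem' := by
    rintro a ⟨z, m, rfl⟩
    exact ⟨-z, m, by push_cast; ring⟩

/-- The Prüfer group `ℤ_{p^∞} = ℤ[1/p]/ℤ`, the quotient of `ℤ[1/p]` by its
subgroup of integers. -/
def Prufer (p : ℕ) (hp : p.Prime) : Type :=
  ZOneOverP p hp ⧸ ((AddSubgroup.zmultiples (1 : ℚ)).addSubgroupOf (ZOneOverP p hp))

noncomputable instance (p : ℕ) (hp : p.Prime) : AddCommGroup (Prufer p hp) :=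
  QuotientAddGroup.Quotient.addCommGroup _

/-!
Pumping the automaton for the graph of addition shows `|x + y| ≤ max |x| |y| + C`, so `m • x`
is only `O(log m)` longer than `x`; pumping simultaneously the words for `h, 2h, …, ph` shows
that every `p`-th root can be chosen at most a constant longer than its `p`-th multiple. Take
`d` elements of order `p` in independent summands and short `p^k`-th roots `hᵢ` of them: the
`p^(kd)` sums `∑ cᵢ • hᵢ`, `0 ≤ cᵢ < p^k`, are distinct and have encodings of length
`N_d + O(k)`, with slope independent of `d`. Counting words gives `p^(kd) ≤ E_d * B^k` for all
`k`, which fails as soon as `p^d > B`.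
-/

def excise {α : Type*} (t₁ t₂ : ℕ) (l : List α) : List α :=
  l.take t₁ ++ l.drop t₂

section Excise

variable {α : Type*} {t₁ t₂ : ℕ}

lemma length_excise (l : List α) :
    (excise t₁ t₂ l).length = min t₁ l.length + (l.length - t₂) := by
  simp [excise]

lemma excise_of_length_le {l : List α} (hl : l.length ≤ t₁) (h : t₁ ≤ t₂) :
    excise t₁ t₂ l = l := by
  rw [excise, List.take_of_length_le hl, List.drop_eq_nil_of_le (hl.trans h), List.append_nil]

lemma getElem?_excise (l : List α) (h : t₁ ≤ t₂) (k : ℕ) :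
    (excise t₁ t₂ l)[k]? = if k < t₁ then l[k]? else l[k + (t₂ - t₁)]? := by
  rw [excise, List.getElem?_append, List.length_take, List.getElem?_drop]
  by_cases hl : t₁ ≤ l.length
  · rw [min_eq_left hl]
    split_ifs with hk
    · rw [List.getElem?_take_of_lt hk]
    · congr 1; omega
  · rw [min_eq_right (by omega)]
    split_ifs with hk hk' hk'
    · rw [List.getElem?_take_of_lt hk']
    · omega
    all_goals rw [List.getElem?_eq_none (by omega), List.getElem?_eq_none (by omega)]

end Excise

section Conv

variable {α : Type*} {n : ℕ}

lemma getElem?_conv (w : Fin n → List α) (k : ℕ) :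
    (conv w)[k]? = if k < Finset.univ.sup (fun i => (w i).length)
      then some (fun i => (w i)[k]?) else none := by
  rw [conv, List.getElem?_map]
  split_ifs with h
  · rw [List.getElem?_range h]; rfl
  · rw [List.getElem?_eq_none (by simpa using h)]; rfl

lemma getElem?_eq_bind_getElem?_conv (w : Fin n → List α) (i : Fin n) (k : ℕ) :
    (w i)[k]? = (conv w)[k]?.bind (· i) := by
  rw [getElem?_conv]
  split_ifs with h
  · rfl
  · exact List.getElem?_eq_none <| (Finset.le_sup (f := fun i => (w i).length)
      (Finset.mem_univ i)).trans (not_lt.mp h)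

lemma conv_injective : Function.Injective (conv : (Fin n → List α) → _) := by
  intro v w h
  funext i
  ext1 k
  rw [getElem?_eq_bind_getElem?_conv v, getElem?_eq_bind_getElem?_conv w, h]

lemma excise_conv {t₁ t₂ : ℕ} (h : t₁ ≤ t₂) (w : Fin n → List α) :
    excise t₁ t₂ (conv w) = conv fun i => excise t₁ t₂ (w i) := by
  set S := Finset.univ.sup fun i => (w i).length
  -- `m ↦ min t₁ m + (m - t₂)` is monotone, so it commutes with the maximum of the lengths
  have hS : (Finset.univ.sup fun i => (excise t₁ t₂ (w i)).length) = min t₁ S + (S - t₂) := by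
    simp only [length_excise]
    refine (Finset.apply_sup_eq_sup_comp_of_linearOrder (fun m => min t₁ m + (m - t₂))
      (fun a b hab => ?_) (by simp)).symm
    dsimp only
    have := min_le_min_left t₁ hab
    omega
  ext1 k
  rw [getElem?_excise _ h, getElem?_conv, getElem?_conv, getElem?_conv, hS]
  split_ifs <;> first | rfl | omega | (congr 2; funext i; rw [getElem?_excise _ h]; simp [*])

lemma excise_conv_three {t₁ t₂ : ℕ} (h : t₁ ≤ t₂) (u v w : List α) :
    excise t₁ t₂ (conv ![u, v, w]) = conv ![excise t₁ t₂ u, excise t₁ t₂ v, excise t₁ t₂ w] := by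
  rw [excise_conv h]
  congr 1
  funext i
  fin_cases i <;> rfl

end Conv

lemma exists_lt_lt_map_eq_of_add_card_lt {β : Type*} [Fintype β] (f : ℕ → β) {a b : ℕ}
    (h : a + Fintype.card β < b) : ∃ t₁ t₂, a ≤ t₁ ∧ t₁ < t₂ ∧ t₂ < b ∧ f t₁ = f t₂ := by
  have hcard : (Finset.univ : Finset β).card < (Finset.Ico a b).card := by
    rw [Nat.card_Ico, Finset.card_univ]; omega
  obtain ⟨x, hx, y, hy, hxy, hfxy⟩ :=
    Finset.exists_ne_map_eq_of_card_lt_of_maps_to hcard fun t _ => Finset.mem_univ (f t)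
  rw [Finset.mem_Ico] at hx hy
  rcases hxy.lt_or_gt with hlt | hlt
  · exact ⟨x, y, hx.1, hlt, hy.2, hfxy⟩
  · exact ⟨y, x, hy.1, hlt, hx.2, hfxy.symm⟩

namespace DFA

variable {α σ : Type*} (M : DFA α σ)

lemma excise_mem_accepts {w : List α} (hw : w ∈ M.accepts) {t₁ t₂ : ℕ}
    (heq : M.eval (w.take t₁) = M.eval (w.take t₂)) : excise t₁ t₂ w ∈ M.accepts := by
  rw [mem_accepts] at hw ⊢
  rwa [excise, eval, evalFrom_of_append, ← eval, heq, eval, ← evalFrom_of_append,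
    List.take_append_drop]

lemma exists_excise_mem_accepts [Fintype σ] {n : ℕ} (W : Fin n → List α)
    (hW : ∀ j, W j ∈ M.accepts) {lo hi : ℕ} (h : lo + Fintype.card σ ^ n < hi) :
    ∃ t₁ t₂, lo ≤ t₁ ∧ t₁ < t₂ ∧ t₂ < hi ∧ ∀ j, excise t₁ t₂ (W j) ∈ M.accepts := by
  obtain ⟨t₁, t₂, hlo, h12, hhi, heq⟩ := exists_lt_lt_map_eq_of_add_card_lt
    (fun t j => M.eval ((W j).take t)) (by simpa using h)
  exact ⟨t₁, t₂, hlo, h12, hhi, fun j => M.excise_mem_accepts (hW j) (congrFun heq j)⟩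

end DFA

/-- `enc` is an automatic presentation of `(G, +)` whose addition graph is recognised by `M`. -/
structure DFA.PresentsAdd {G Γ σ : Type*} [Add G] (M : DFA (Fin 3 → Option Γ) σ)
    (enc : G → List Γ) : Prop where
  injective : Function.Injective enc
  accepts_eq : M.accepts = {w | ∃ x y : G, w = conv ![enc x, enc y, enc (x + y)]}

namespace DFA.PresentsAdd

variable {G Γ σ : Type*} {M : DFA (Fin 3 → Option Γ) σ} {enc : G → List Γ}

section Add

variable [Add G]

lemma exists_of_conv_mem (hM : M.PresentsAdd enc) {u v w : List Γ}
    (h : conv ![u, v, w] ∈ M.accepts) : ∃ x y, u = enc x ∧ v = enc y ∧ w = enc (x + y) := by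
  rw [hM.accepts_eq] at h
  obtain ⟨x, y, hxy⟩ := h
  have := conv_injective hxy
  exact ⟨x, y, congrFun this 0, congrFun this 1, congrFun this 2⟩

lemma conv_mem_accepts_iff (hM : M.PresentsAdd enc) {x y : G} {w : List Γ} :
    conv ![enc x, enc y, w] ∈ M.accepts ↔ w = enc (x + y) := by
  refine ⟨fun h => ?_, fun h => hM.accepts_eq ▸ ⟨x, y, h ▸ rfl⟩⟩
  obtain ⟨x', y', hx, hy, rfl⟩ := hM.exists_of_conv_mem h
  rw [hM.injective hx, hM.injective hy]

lemma length_add_le [Fintype σ] (hM : M.PresentsAdd enc) (x y : G) :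
    (enc (x + y)).length ≤ max (enc x).length (enc y).length + Fintype.card σ := by
  by_contra! hlong
  obtain ⟨t₁, t₂, hlo, h12, hhi, hacc⟩ := M.exists_excise_mem_accepts
    ![conv ![enc x, enc y, enc (x + y)]] (Fin.forall_fin_one.2 (hM.conv_mem_accepts_iff.2 rfl))
    (by simpa using hlong)
  have hcut := hacc 0
  rw [Matrix.cons_val_fin_one, excise_conv_three h12.le,
    excise_of_length_le (le_of_max_le_left hlo) h12.le,
    excise_of_length_le (le_of_max_le_right hlo) h12.le, hM.conv_mem_accepts_iff] at hcut
  have := congrArg List.length hcut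
  rw [length_excise] at this
  omega

end Add

variable [Fintype σ]

/-- Binary expansion: `m • x` is computed by at most `2n` additions. -/
lemma length_nsmul_le [AddMonoid G] (hM : M.PresentsAdd enc) {x : G} {L : ℕ}
    (hx : (enc x).length ≤ L) (h0 : (enc 0).length ≤ L) {n m : ℕ} (hm : m < 2 ^ n) :
    (enc (m • x)).length ≤ L + 2 * Fintype.card σ * n := by
  induction n generalizing m with
  | zero => simpa [Nat.lt_one_iff.mp hm] using h0
  | succ n ih =>
    obtain ⟨k, rfl | rfl⟩ := Nat.even_or_odd' m
    · have hk := ih (m := k) (by rw [pow_succ] at hm; omega)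
      have := hM.length_add_le (k • x) (k • x)
      rw [two_mul, add_nsmul]
      grind
    · have hk := ih (m := k) (by rw [pow_succ] at hm; omega)
      have h1 := hM.length_add_le (k • x) (k • x)
      have h2 := hM.length_add_le (k • x + k • x) x
      rw [succ_nsmul, two_mul, add_nsmul]
      grind

lemma length_sum_le [AddCommMonoid G] (hM : M.PresentsAdd enc) {ι : Type*} (s : Finset ι)
    {f : ι → G} {L : ℕ} (hf : ∀ i ∈ s, (enc (f i)).length ≤ L) (h0 : (enc 0).length ≤ L) :
    (enc (∑ i ∈ s, f i)).length ≤ L + Fintype.card σ * s.card := by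
  classical
  induction s using Finset.induction_on with
  | empty => simpa using h0
  | insert i s hi ih =>
    rw [Finset.sum_insert hi, Finset.card_insert_of_notMem hi]
    have h1 := hM.length_add_le (f i) (∑ j ∈ s, f j)
    have h2 := ih fun j hj => hf j (Finset.mem_insert_of_mem hj)
    have h3 := hf i (Finset.mem_insert_self i s)
    grind

section AddMonoid

variable [AddMonoid G]

/-- If a `(q+1)`-th root `h` of `g` is much longer than `g`, excising one factor from all the
accepted words `enc h ⊗ enc ((j+1) • h) ⊗ enc ((j+2) • h)`, `j < q`, at the same place yields a
shorter `(q+1)`-th root of `g`. -/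
lemma exists_nsmul_eq_length_lt (hM : M.PresentsAdd enc) {q : ℕ} {h : G}
    (hlong : (enc ((q + 1) • h)).length + Fintype.card σ ^ q < (enc h).length) :
    ∃ h', (q + 1) • h' = (q + 1) • h ∧ (enc h').length < (enc h).length := by
  rcases q with _ | q
  · simp at hlong
  obtain ⟨t₁, t₂, hlo, h12, hhi, hacc⟩ := M.exists_excise_mem_accepts
    (fun j : Fin (q + 1) => conv ![enc h, enc (((j : ℕ) + 1) • h), enc (((j : ℕ) + 2) • h)])
    (fun j => hM.conv_mem_accepts_iff.2 (by rw [← succ_nsmul']))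
    hlong
  simp only [excise_conv_three h12.le] at hacc
  obtain ⟨h', -, hh', -, -⟩ := hM.exists_of_conv_mem (hacc 0)
  have hchain : ∀ j ≤ q + 1, excise t₁ t₂ (enc ((j + 1) • h)) = enc ((j + 1) • h') := by
    intro j hj
    induction j with
    | zero => simpa using hh'
    | succ j ih =>
      have := hacc ⟨j, by omega⟩
      dsimp only at this
      rwa [hh', ih (by omega), hM.conv_mem_accepts_iff, ← succ_nsmul'] at this
  refine ⟨h', hM.injective ?_, ?_⟩
  · rw [← hchain (q + 1) le_rfl, excise_of_length_le hlo h12.le]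
  · rw [← hh', length_excise]
    omega

lemma exists_nsmul_eq_length_le (hM : M.PresentsAdd enc) {q : ℕ} {h g : G}
    (hg : (q + 1) • h = g) :
    ∃ h', (q + 1) • h' = g ∧ (enc h').length ≤ (enc g).length + Fintype.card σ ^ q := by
  induction hn : (enc h).length using Nat.strong_induction_on generalizing h with
  | _ n ih =>
    by_cases hshort : (enc h).length ≤ (enc g).length + Fintype.card σ ^ q
    · exact ⟨h, hg, hshort⟩
    · obtain ⟨h', hh', hlt⟩ := hM.exists_nsmul_eq_length_lt (hg ▸ (not_le.mp hshort))
      exact ih _ (hn ▸ hlt) (hh'.trans hg) rfl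

lemma exists_pow_nsmul_eq_length_le (hM : M.PresentsAdd enc) {q : ℕ}
    (hdiv : ∀ g : G, ∃ h, (q + 1) • h = g) (g : G) (k : ℕ) :
    ∃ h, (q + 1) ^ k • h = g ∧ (enc h).length ≤ (enc g).length + k * Fintype.card σ ^ q := by
  induction k with
  | zero => exact ⟨g, by simp, by simp⟩
  | succ k ih =>
    obtain ⟨h, hh, hlen⟩ := ih
    obtain ⟨r, hr⟩ := hdiv h
    obtain ⟨h', hh', hlen'⟩ := hM.exists_nsmul_eq_length_le hr
    refine ⟨h', by rw [pow_succ, mul_nsmul', hh', hh], ?_⟩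
    rw [add_one_mul]
    omega

end AddMonoid

end DFA.PresentsAdd

lemma card_le_of_injective_length_le {β Γ : Type*} [Fintype β] [Fintype Γ] {f : β → List Γ}
    (hf : Function.Injective f) {L : ℕ} (hL : ∀ b, (f b).length ≤ L) :
    Fintype.card β ≤ (Fintype.card Γ + 1) ^ L := by
  have hinj : Function.Injective fun b (i : Fin L) => (f b)[(i : ℕ)]? := by
    intro b b' hbb'
    apply hf
    ext1 k
    by_cases hk : k < L
    · exact congrFun hbb' ⟨k, hk⟩
    · rw [List.getElem?_eq_none ((hL b).trans (not_lt.mp hk)),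
        List.getElem?_eq_none ((hL b').trans (not_lt.mp hk))]
  simpa using Fintype.card_le_of_injective _ hinj

section Independence

variable {G : Type*} [AddCommGroup G] {ι : Type*} [Fintype ι] {p : ℕ} {v : ι → G}

lemma pow_dvd_of_sum_zsmul_eq_zero
    (hv : ∀ a : ι → ℤ, ∑ i, a i • v i = 0 → ∀ i, (p : ℤ) ∣ a i) (k : ℕ) {h : ι → G}
    (hh : ∀ i, p ^ k • h i = v i) {a : ι → ℤ} (ha : ∑ i, a i • h i = 0) (i : ι) :
    (p : ℤ) ^ k ∣ a i := by
  induction k generalizing h a with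
  | zero => simp
  | succ k ih =>
    have hav : ∑ j, a j • v j = 0 := by
      simp_rw [← hh, smul_comm _ (p ^ (k + 1)), ← Finset.smul_sum, ha, smul_zero]
    choose b hb using hv a hav
    have hbh : ∑ j, b j • (p • h j) = 0 := by
      simp_rw [← natCast_zsmul, smul_smul, mul_comm _ (p : ℤ), ← hb, ha]
    rw [hb i, pow_succ']
    exact mul_dvd_mul_left _ (ih (fun j => by rw [← mul_nsmul', ← pow_succ, hh]) hbh)

lemma injective_sum_nsmul_of_pow_nsmul_eq
    (hv : ∀ a : ι → ℤ, ∑ i, a i • v i = 0 → ∀ i, (p : ℤ) ∣ a i) {k : ℕ} {h : ι → G}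
    (hh : ∀ i, p ^ k • h i = v i) :
    Function.Injective fun c : ι → Fin (p ^ k) => ∑ i, (c i : ℕ) • h i := by
  intro c c' hcc
  have hsub : ∑ i, ((c i : ℤ) - (c' i : ℤ)) • h i = 0 := by
    simp_rw [sub_smul, Finset.sum_sub_distrib, natCast_zsmul]
    exact sub_eq_zero.2 hcc
  funext i
  have hlt : |(c i : ℤ) - (c' i : ℤ)| < (p : ℤ) ^ k := by
    rw [abs_lt]
    have : ((c i : ℕ) : ℤ) < (p : ℤ) ^ k := by exact_mod_cast (c i).isLt
    have : ((c' i : ℕ) : ℤ) < (p : ℤ) ^ k := by exact_mod_cast (c' i).isLt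
    constructor <;> omega
  have := Int.eq_zero_of_abs_lt_dvd (pow_dvd_of_sum_zsmul_eq_zero hv k hh hsub i) hlt
  omega

end Independence

lemma DirectSum.exists_nsmul_eq {ι : Type*} {β : ι → Type*} [∀ i, AddCommMonoid (β i)] {n : ℕ}
    (hdiv : ∀ i (x : β i), ∃ y, n • y = x) (g : DirectSum ι β) : ∃ y, n • y = g := by
  classical
  induction g using DirectSum.induction_on with
  | zero => exact ⟨0, smul_zero n⟩
  | of i x =>
    obtain ⟨y, rfl⟩ := hdiv i x
    exact ⟨DirectSum.of _ i y, (map_nsmul _ _ _).symm⟩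
  | add x y hx hy =>
    obtain ⟨x', rfl⟩ := hx
    obtain ⟨y', rfl⟩ := hy
    exact ⟨x' + y', smul_add n x' y'⟩

lemma DirectSum.dvd_of_sum_zsmul_of_eq_zero {ι κ H : Type*} [Fintype ι] [DecidableEq κ]
    [AddCommGroup H] {φ : ι → κ} (hφ : Function.Injective φ) {p : ℕ} {u : H}
    (hu : ∀ a : ℤ, a • u = 0 → (p : ℤ) ∣ a) (a : ι → ℤ)
    (ha : ∑ i, a i • DirectSum.of (fun _ : κ => H) (φ i) u = 0) (i : ι) : (p : ℤ) ∣ a i := by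
  apply hu
  have := congrArg (· (φ i)) ha
  dsimp only at this
  rwa [DirectSum.sum_apply, Finset.sum_eq_single i (fun j _ hj => by
    rw [DFinsupp.smul_apply, DirectSum.of_eq_of_ne _ _ _ (hφ.ne hj).symm, smul_zero])
    (by simp), DFinsupp.smul_apply, DirectSum.of_eq_same] at this

namespace Prufer

noncomputable def mk (p : ℕ) (hp : p.Prime) : ZOneOverP p hp →+ Prufer p hp :=
  QuotientAddGroup.mk' _

lemma mk_eq_zero_iff {p : ℕ} {hp : p.Prime} {x : ZOneOverP p hp} :
    mk p hp x = 0 ↔ ∃ k : ℤ, (k : ℚ) = x := by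
  change (QuotientAddGroup.mk x : ZOneOverP p hp ⧸ _) = 0 ↔ _
  rw [QuotientAddGroup.eq_zero_iff,
    AddSubgroup.mem_addSubgroupOf, AddSubgroup.mem_zmultiples_iff]
  simp

variable (p : ℕ) (hp : p.Prime)

lemma exists_nsmul_eq (g : Prufer p hp) : ∃ h, p • h = g := by
  have hp0 : (p : ℚ) ≠ 0 := by exact_mod_cast hp.ne_zero
  obtain ⟨⟨_, z, m, rfl⟩, rfl⟩ := QuotientAddGroup.mk'_surjective _ g
  refine ⟨mk p hp ⟨z / p ^ (m + 1), z, m + 1, rfl⟩, ?_⟩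
  rw [← map_nsmul]
  congr 1
  ext
  simp only [AddSubgroup.coe_nsmul, nsmul_eq_mul, pow_succ]
  field_simp

lemma exists_dvd_of_zsmul_eq_zero : ∃ u : Prufer p hp, ∀ a : ℤ, a • u = 0 → (p : ℤ) ∣ a := by
  have hp0 : (p : ℚ) ≠ 0 := by exact_mod_cast hp.ne_zero
  refine ⟨mk p hp ⟨1 / p, 1, 1, by simp⟩, fun a ha => ?_⟩
  rw [← map_zsmul, mk_eq_zero_iff] at ha
  obtain ⟨k, hk⟩ := ha
  simp only [AddSubgroup.coe_zsmul, zsmul_eq_mul] at hk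
  refine ⟨k, ?_⟩
  field_simp at hk
  rw [mul_comm]
  exact_mod_cast hk.symm

end Prufer

namespace DFA.PresentsAdd

variable {G Γ σ : Type*} [AddCommGroup G] [Fintype Γ] [Fintype σ]
  {M : DFA (Fin 3 → Option Γ) σ} {enc : G → List Γ}

/-- The sums `∑ cᵢ • hᵢ`, `cᵢ < (q+1)^k`, over short `(q+1)^k`-th roots `hᵢ` of the `vᵢ` are
distinct and have encodings of length linear in `k`, with slope independent of `d`. -/
lemma pow_pow_le_of_independent (hM : M.PresentsAdd enc) {q : ℕ}
    (hdiv : ∀ g : G, ∃ h, (q + 1) • h = g) {d : ℕ} {v : Fin d → G}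
    (hv : ∀ a : Fin d → ℤ, ∑ i, a i • v i = 0 → ∀ i, (q + 1 : ℤ) ∣ a i)
    {N : ℕ} (h0 : (enc 0).length ≤ N) (hN : ∀ i, (enc (v i)).length ≤ N) (k : ℕ) :
    ((q + 1) ^ k) ^ d ≤ (Fintype.card Γ + 1) ^
      (N + k * (Fintype.card σ ^ q + 2 * Fintype.card σ * (q + 1)) + Fintype.card σ * d) := by
  choose h hh hlen using fun i => hM.exists_pow_nsmul_eq_length_le hdiv (v i) k
  have hinj := injective_sum_nsmul_of_pow_nsmul_eq (p := q + 1) (by exact_mod_cast hv) hh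
  have hpow : (q + 1) ^ k ≤ 2 ^ ((q + 1) * k) := by
    rw [pow_mul]
    exact Nat.pow_le_pow_left Nat.lt_two_pow_self.le k
  have hshort : ∀ c : Fin d → Fin ((q + 1) ^ k), (enc (∑ i, (c i : ℕ) • h i)).length ≤
      N + k * (Fintype.card σ ^ q + 2 * Fintype.card σ * (q + 1)) + Fintype.card σ * d := by
    intro c
    have := hM.length_sum_le Finset.univ
      (L := N + k * Fintype.card σ ^ q + 2 * Fintype.card σ * ((q + 1) * k))
      (fun i _ => hM.length_nsmul_le ((hlen i).trans (Nat.add_le_add_right (hN i) _))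
        (by omega) ((c i).isLt.trans_le hpow))
      (by omega)
    rw [Finset.card_univ, Fintype.card_fin] at this
    grind
  simpa using card_le_of_injective_length_le (hM.injective.comp hinj) hshort

end DFA.PresentsAdd

lemma exists_mul_pow_lt_pow {a b : ℕ} (hab : a < b) (E : ℕ) : ∃ k, E * a ^ k < b ^ k := by
  have hb : (0 : ℚ) < b := by exact_mod_cast (Nat.zero_le a).trans_lt hab
  obtain ⟨k, hk⟩ := exists_pow_lt_of_lt_one (x := 1 / (E + 1 : ℚ)) (y := a / b) (by positivity)
    ((div_lt_one hb).2 (by exact_mod_cast hab))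
  refine ⟨k, ?_⟩
  rw [div_pow, div_lt_div_iff₀ (by positivity) (by positivity), one_mul] at hk
  have : (E * a ^ k : ℚ) < b ^ k := by nlinarith [pow_nonneg (Nat.cast_nonneg (α := ℚ) a) k]
  exact_mod_cast this

theorem DFA.not_presentsAdd_of_divisible {G Γ σ : Type*} [AddCommGroup G] [Fintype Γ]
    [Fintype σ] {p : ℕ} (hp : 2 ≤ p) (hdiv : ∀ g : G, ∃ h, p • h = g)
    (hind : ∀ d, ∃ v : Fin d → G, ∀ a : Fin d → ℤ, ∑ i, a i • v i = 0 → ∀ i, (p : ℤ) ∣ a i)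
    (M : DFA (Fin 3 → Option Γ) σ) (enc : G → List Γ) : ¬ M.PresentsAdd enc := by
  intro hM
  obtain ⟨q, rfl⟩ : ∃ q, p = q + 1 := ⟨p - 1, by omega⟩
  set C := Fintype.card σ
  set B := (Fintype.card Γ + 1) ^ (C ^ q + 2 * C * (q + 1))
  obtain ⟨v, hv⟩ := hind B
  set N := max (enc 0).length (Finset.univ.sup fun i => (enc (v i)).length)
  have hcount : ∀ k, ((q + 1) ^ B) ^ k ≤ (Fintype.card Γ + 1) ^ (N + C * B) * B ^ k := by
    intro k
    calc ((q + 1) ^ B) ^ k = ((q + 1) ^ k) ^ B := by rw [← pow_mul, ← pow_mul, mul_comm]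
      _ ≤ (Fintype.card Γ + 1) ^ (N + k * (C ^ q + 2 * C * (q + 1)) + C * B) :=
        hM.pow_pow_le_of_independent hdiv (by exact_mod_cast hv) (le_max_left _ _)
          (fun i => le_max_of_le_right
            (Finset.le_sup (f := fun i => (enc (v i)).length) (Finset.mem_univ i))) k
      _ = (Fintype.card Γ + 1) ^ (N + C * B) * B ^ k := by
        rw [← pow_mul, ← pow_add]
        ring_nf
  have hB : B < (q + 1) ^ B :=
    Nat.lt_two_pow_self.trans_le (Nat.pow_le_pow_left (by omega) B)
  obtain ⟨k, hk⟩ := exists_mul_pow_lt_pow hB ((Fintype.card Γ + 1) ^ (N + C * B))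
  exact (hk.trans_le (hcount k)).false

/-- The direct sum of countably infinitely many copies of the Prüfer group
`ℤ_{p^∞}` has no automatic presentation. -/
theorem directSum_Prufer_not_automatic (p : ℕ) (hp : p.Prime) :
    ¬ ∃ (Γ : Type) (_ : Fintype Γ) (A : Set (List Γ)) (add : A → A → A)
        (e : DirectSum ℕ (fun _ => Prufer p hp) ≃ A),
        Language.IsRegular (A : Language Γ) ∧
        Language.IsRegular
          {w | ∃ x y : A, w = conv ![(x : List Γ), (y : List Γ), (add x y : List Γ)]} ∧
        ∀ x y : DirectSum ℕ (fun _ => Prufer p hp),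
          e (x + y) = add (e x) (e y) := by
  rintro ⟨Γ, _, A, add, e, -, ⟨σ, _, M, hM⟩, hadd⟩
  have hpres : M.PresentsAdd fun g => (e g : List Γ) := by
    refine ⟨Subtype.val_injective.comp e.injective, hM.trans (Set.ext fun w => ⟨?_, ?_⟩)⟩
    · rintro ⟨x, y, rfl⟩
      exact ⟨e.symm x, e.symm y, by simp [hadd]⟩
    · rintro ⟨x, y, rfl⟩
      exact ⟨e x, e y, by rw [hadd]⟩
  obtain ⟨u, hu⟩ := Prufer.exists_dvd_of_zsmul_eq_zero p hp
  exact DFA.not_presentsAdd_of_divisible hp.two_le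
    (DirectSum.exists_nsmul_eq fun _ => Prufer.exists_nsmul_eq p hp)
    (fun d => ⟨fun i => DirectSum.of _ (i : ℕ) u,
      DirectSum.dvd_of_sum_zsmul_of_eq_zero Fin.val_injective hu⟩) M _ hpres
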